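/- Let n ∈ (1,∞). The function c_n : [0,4] × [0,1] → [0,∞) defined by c_n(z,u) := z(4−z)[(1 − zu + zu²)^{n/2} − (1−u)^n]² / ( 2u² [u^{2n−2} + (1−u)^{2n−2}] ) for u ∈ (0,1], and c_n(z,0) := n² z (4−z)(2−z)²/8, is well defined (the denominator is nonzero for u ∈ (0,1]) and continuous on [0,4] × [0,1]; consequently c_n attains a finite maximum C_n := max_{(z,u)∈[0,4]×[0,1]} c_n(z,u) ∈ (0,∞). -/

import Mathlib

/-!
For `u ≠ 0` the numerator is `u²` times the square of
`g(z, u) = ((1 - z u + z u²)^{n/2} - (1 - u)^n) / u`. Writing `1 - z u + z u² = 1 + u (z u - z)`,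
`g` is a combination of difference quotients of `t ↦ (1 + t)^q` at `0`, which extend
continuously (by `q`) to `t = 0` because `t ↦ (1 + t)^q` is differentiable there. Hence `c_n`
agrees on the whole rectangle with `z (4 - z) g² / (2 (u^{2n-2} + (1 - u)^{2n-2}))`, whose
denominator never vanishes, and `g(z, 0) = n (2 - z) / 2` recovers the value at `u = 0`.
Compactness then gives the maximum, which is at least `c_n(1, 0) = 3 n² / 8 > 0`.
-/

noncomputable section

/-- The function `c_n` of the paper on `[0,4] × [0,1]` (first coordinate `z`,
second coordinate `u`), defined piecewise at `u = 0`. -/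
def cFun (n : ℝ) (zu : ℝ × ℝ) : ℝ :=
  if zu.2 = 0 then n ^ 2 * zu.1 * (4 - zu.1) * (2 - zu.1) ^ 2 / 8
  else zu.1 * (4 - zu.1) *
      ((1 - zu.1 * zu.2 + zu.1 * zu.2 ^ 2) ^ (n / 2) - (1 - zu.2) ^ n) ^ 2 /
    (2 * zu.2 ^ 2 * (zu.2 ^ (2 * n - 2) + (1 - zu.2) ^ (2 * n - 2)))

lemma hasDerivAt_one_add_rpow_zero (q : ℝ) : HasDerivAt (fun t : ℝ => (1 + t) ^ q) q 0 := by
  simpa using ((hasDerivAt_id (0 : ℝ)).const_add 1).rpow_const (p := q) (by simp)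

lemma continuous_dslope_one_add_rpow {q : ℝ} (hq : 0 < q) :
    Continuous (dslope (fun t : ℝ => (1 + t) ^ q) 0) :=
  continuousOn_univ.1 <| (continuousOn_dslope Filter.univ_mem).2
    ⟨by fun_prop (disch := positivity), (hasDerivAt_one_add_rpow_zero q).differentiableAt⟩

lemma rpow_add_one_sub_rpow_pos (p : ℝ) {u : ℝ} (hu₀ : 0 ≤ u) (hu₁ : u ≤ 1) :
    0 < u ^ p + (1 - u) ^ p := by
  rcases hu₀.eq_or_lt with rfl | hu₀
  · simp [Real.rpow_nonneg le_rfl, add_pos_of_nonneg_of_pos]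
  · exact add_pos_of_pos_of_nonneg (by positivity) (Real.rpow_nonneg (by linarith) p)

def cFunQuot (n : ℝ) (zu : ℝ × ℝ) : ℝ :=
  dslope (fun t : ℝ => (1 + t) ^ (n / 2)) 0 (zu.1 * zu.2 ^ 2 - zu.1 * zu.2) * (zu.1 * zu.2 - zu.1)
    + dslope (fun t : ℝ => (1 + t) ^ n) 0 (-zu.2)

lemma cFunQuot_mul (n z u : ℝ) :
    cFunQuot n (z, u) * u = (1 - z * u + z * u ^ 2) ^ (n / 2) - (1 - u) ^ n := by
  have h₁ := sub_smul_dslope (fun t : ℝ => (1 + t) ^ (n / 2)) 0 (z * u ^ 2 - z * u)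
  have h₂ := sub_smul_dslope (fun t : ℝ => (1 + t) ^ n) 0 (-u)
  simp only [sub_zero, smul_eq_mul, add_zero, Real.one_rpow] at h₁ h₂
  rw [cFunQuot, show 1 - z * u + z * u ^ 2 = 1 + (z * u ^ 2 - z * u) by ring,
    sub_eq_add_neg (1 : ℝ) u]
  linear_combination h₁ - h₂

lemma cFunQuot_zero (n z : ℝ) : cFunQuot n (z, 0) = n * (2 - z) / 2 := by
  rw [cFunQuot, show z * 0 ^ 2 - z * 0 = 0 by ring, neg_zero, dslope_same, dslope_same,
    (hasDerivAt_one_add_rpow_zero _).deriv, (hasDerivAt_one_add_rpow_zero _).deriv]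
  ring

lemma continuous_cFunQuot {n : ℝ} (hn : 0 < n) : Continuous (cFunQuot n) := by
  have h₁ := continuous_dslope_one_add_rpow (half_pos hn)
  have h₂ := continuous_dslope_one_add_rpow hn
  unfold cFunQuot
  fun_prop

lemma cFun_eq {n : ℝ} (hn : n ≠ 1) (z u : ℝ) :
    cFun n (z, u) =
      z * (4 - z) * cFunQuot n (z, u) ^ 2 / (2 * (u ^ (2 * n - 2) + (1 - u) ^ (2 * n - 2))) := by
  rcases eq_or_ne u 0 with rfl | hu
  · have : (2 * n - 2) ≠ 0 := fun h => hn (by linarith)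
    simp only [cFun, ↓reduceIte, cFunQuot_zero, Real.zero_rpow this, sub_zero, Real.one_rpow,
      zero_add, mul_one]
    ring
  · rw [cFun, if_neg hu, ← cFunQuot_mul, mul_pow, ← mul_assoc, mul_right_comm 2]
    exact mul_div_mul_right _ _ (pow_ne_zero 2 hu)

/-- for `n ∈ (1,∞)`, the function `c_n` is well defined (its denominator is
nonzero for `u ∈ (0,1]`), continuous on `[0,4] × [0,1]`, and attains a finite, strictly
positive maximum `C_n` there. -/
theorem stmt7 (n : ℝ) (hn : 1 < n) :
    (∀ z ∈ Set.Icc (0 : ℝ) 4, ∀ u ∈ Set.Ioc (0 : ℝ) 1,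
      2 * u ^ 2 * (u ^ (2 * n - 2) + (1 - u) ^ (2 * n - 2)) ≠ 0) ∧
    ContinuousOn (cFun n) (Set.Icc (0 : ℝ) 4 ×ˢ Set.Icc (0 : ℝ) 1) ∧
    ∃ zu ∈ Set.Icc (0 : ℝ) 4 ×ˢ Set.Icc (0 : ℝ) 1,
      (∀ zu' ∈ Set.Icc (0 : ℝ) 4 ×ˢ Set.Icc (0 : ℝ) 1, cFun n zu' ≤ cFun n zu) ∧
      0 < cFun n zu := by
  set K := Set.Icc (0 : ℝ) 4 ×ˢ Set.Icc (0 : ℝ) 1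
  have hden : ∀ zu ∈ K, 0 < 2 * (zu.2 ^ (2 * n - 2) + (1 - zu.2) ^ (2 * n - 2)) :=
    fun zu h => mul_pos two_pos (rpow_add_one_sub_rpow_pos _ h.2.1 h.2.2)
  have hcont : ContinuousOn (cFun n) K := by
    have := continuous_cFunQuot (n := n) (by linarith)
    refine ContinuousOn.congr ?_ fun zu _ => cFun_eq hn.ne' zu.1 zu.2
    refine ContinuousOn.div (by fun_prop) ?_ fun zu h => (hden zu h).ne'
    fun_prop (disch := linarith)
  obtain ⟨zu, hzu, hmax⟩ := (isCompact_Icc.prod isCompact_Icc).exists_isMaxOn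
    ⟨(0, 0), by simp⟩ hcont
  refine ⟨fun z _ u hu => ?_, hcont, zu, hzu, fun zu' h => hmax h, ?_⟩
  · have := rpow_add_one_sub_rpow_pos (2 * n - 2) hu.1.le hu.2
    have := hu.1
    positivity
  · have h₁₀ : cFun n (1, 0) = 3 * n ^ 2 / 8 := by norm_num [cFun]; ring
    exact (by rw [h₁₀]; positivity : 0 < cFun n (1, 0)).trans_le (hmax (by simp))
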